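/- In the setting of the context (in particular A admits no local improvement of w²(A), A* is a maximum-weight independent set, A'* is disjoint from P, and every u ∈ A'* satisfies N(u,A') ≠ ∅ so that charge' is defined): for all v ∈ A', ∑_{u∈T'_v} charge'(u,v) ≤ ((d+2)/4)·w(v). -/

import Mathlib

open Finset

open scoped Classical

variable {V : Type*}

noncomputable section

/-- Neighborhood of `U` in `W`: vertices of `W` that lie in `U` or are adjacent to some
vertex of `U`. -/
def nbhd (G : SimpleGraph V) (U W : Finset V) : Finset V :=
  W.filter (fun x => x ∈ U ∨ ∃ u ∈ U, G.Adj u x)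

/-- Neighborhood of a single vertex `u` in `W`. -/
def nbhd1 (G : SimpleGraph V) (u : V) (W : Finset V) : Finset V :=
  nbhd G {u} W

/-- Total weight of a finite set of vertices. -/
def wsum (w : V → ℝ) (U : Finset V) : ℝ := ∑ x ∈ U, w x

/-- Total squared weight of a finite set of vertices. -/
def wsq (w : V → ℝ) (U : Finset V) : ℝ := ∑ x ∈ U, (w x) ^ 2

/-- A finite set of vertices is independent. -/
def IsIndep (G : SimpleGraph V) (S : Finset V) : Prop :=
  ∀ a ∈ S, ∀ b ∈ S, a ≠ b → ¬ G.Adj a b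

/-- `G` is `d`-claw free: every independent subset of the neighborhood of any vertex has
size at most `d - 1`. -/
def ClawFree (G : SimpleGraph V) (d : ℕ) : Prop :=
  ∀ v : V, ∀ S : Finset V, (∀ x ∈ S, G.Adj v x) → IsIndep G S → S.card ≤ d - 1

/-- `X` is a local improvement of `w²(A)`. -/
def LocalImprovement (G : SimpleGraph V) (d : ℕ) (w : V → ℝ) (A X : Finset V) : Prop :=
  IsIndep G X ∧ X.card ≤ (d - 1) ^ 2 + (d - 1) ∧ wsq w (nbhd G X A) < wsq w X

/-- No claw improves `w²(A)`: `w²(T) ≤ w²(N(T,A))` for every independent set `T` that is a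
singleton or whose vertices are all adjacent to a common vertex. -/
def NoClawImproves (G : SimpleGraph V) (w : V → ℝ) (A : Finset V) : Prop :=
  ∀ T : Finset V, IsIndep G T → (T.card = 1 ∨ ∃ v : V, ∀ x ∈ T, G.Adj v x) →
    wsq w T ≤ wsq w (nbhd G T A)

/-- The charge map, relative to a choice `n` of heaviest neighbors. -/
def charge (G : SimpleGraph V) (w : V → ℝ) (A : Finset V) (n : V → V) (u v : V) : ℝ :=
  if v = n u then w u - wsum w (nbhd1 G u A) / 2 else 0

/-- `u ∈ T_v` is single (with `√ε = 1/2304`). -/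
def IsSingle (G : SimpleGraph V) (w : V → ℝ) (A : Finset V) (u v : V) : Prop :=
  (1 - 1 / 2304 : ℝ) ≤ w u / w v ∧ w u / w v ≤ 1 + 1 / 2304 ∧
  wsum w (nbhd1 G u A) ≤ (1 + 1 / 2304) * w v

/-- `u ∈ T_v` is double (with `√ε = 1/2304`). -/
def IsDouble (G : SimpleGraph V) (w : V → ℝ) (A : Finset V) (u v : V) : Prop :=
  2 ≤ (nbhd1 G u A).card ∧
  ∃ v₂ ∈ (nbhd1 G u A).erase v, (∀ x ∈ (nbhd1 G u A).erase v, w x ≤ w v₂) ∧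
    (1 - 1 / 2304 : ℝ) ≤ w u / w v ∧ w u / w v ≤ 1 + 1 / 2304 ∧
    (1 - 1 / 2304 : ℝ) ≤ w v₂ / w v ∧ w v₂ / w v ≤ 1 ∧
    (2 - 1 / 2304) * w v ≤ wsum w (nbhd1 G u A) ∧ wsum w (nbhd1 G u A) < 2 * w u

/-- The contribution map. -/
def contr (G : SimpleGraph V) (w : V → ℝ) (A : Finset V) (u v : V) : ℝ :=
  if v ∈ nbhd1 G u A then max 0 (((w u) ^ 2 - wsq w ((nbhd1 G u A).erase v)) / w v) else 0

/-! Fix `v ∈ A'` and put `T := T'_v`. Every `u ∈ T` has `v` as a heaviest neighbour in `A'`, which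
gives `2 w(v) charge'(u,v) ≤ w(u)² - w²(N(u,A') - v)` and `(w(u) - w(v))² ≤ w(u)² - w²(N(u,A') - v)`.
Let `D := N(T,A) ∩ B`. The set `X := T ∪ t(D)` is independent, and claw-freeness gives `|T| ≤ d`
and `|D| ≤ d(d-2)`, so `|X| ≤ (d-1)² + (d-1)` and `w²(X) ≤ w²(N(X,A))`. Covering `N(X,A)` by `v`,
the sets `N(u,A') - v` and the sets `N(t(x),A)`, where a single partner only loses
`w²(N(t(x),A)) - w(t(x))² ≤ 3√ε w(x)²`, and using `w²(D) ≤ 9 ∑ w(u)²` (as `T ∩ P = ∅`), the sum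
`Q` of the gains `w(u)² - w²(N(u,A') - v)` is at most `w(v)² + 27√ε ∑ w(u)²`. Since
`∑ w(u)² ≤ 2Q + 2|T| w(v)²`, this forces `Q ≤ (d+2)/2 · w(v)²`, and `2 w(v) ∑ charge' ≤ Q`.
-/

section Neighborhoods

variable {G : SimpleGraph V} {A B S X : Finset V} {u v x : V} {d : ℕ}

lemma mem_nbhd1 : x ∈ nbhd1 G u A ↔ x ∈ A ∧ (x = u ∨ G.Adj u x) := by
  simp [nbhd1, nbhd]

lemma nbhd1_sdiff : nbhd1 G u (A \ B) = nbhd1 G u A \ B := by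
  ext x
  simp only [mem_nbhd1, mem_sdiff]
  tauto

lemma nbhd_eq_biUnion : nbhd G X A = X.biUnion fun x => nbhd1 G x A := by
  ext y
  simp only [nbhd, nbhd1, mem_biUnion, mem_filter, mem_singleton, exists_eq_left]
  constructor
  · rintro ⟨hy, hyX | ⟨x, hx, hxy⟩⟩
    exacts [⟨y, hyX, hy, Or.inl rfl⟩, ⟨x, hx, hy, Or.inr hxy⟩]
  · rintro ⟨x, hx, hy, rfl | hxy⟩
    exacts [⟨hy, Or.inl hx⟩, ⟨hy, Or.inr ⟨x, hx, hxy⟩⟩]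

lemma IsIndep.subset (hS : IsIndep G S) (h : X ⊆ S) : IsIndep G X :=
  fun a ha b hb => hS a (h ha) b (h hb)

lemma nbhd1_eq_singleton (hA : IsIndep G A) (hu : u ∈ A) : nbhd1 G u A = {u} := by
  ext x
  simp only [mem_nbhd1, mem_singleton]
  refine ⟨fun ⟨hx, h⟩ => h.resolve_right fun hux => hA u hu x hx hux.ne hux, ?_⟩
  rintro rfl
  exact ⟨hu, Or.inl rfl⟩

lemma card_nbhd1_le (hG : ClawFree G d) (hd : 2 ≤ d) (hA : IsIndep G A) :
    (nbhd1 G u A).card ≤ d - 1 := by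
  by_cases hu : u ∈ A
  · rw [nbhd1_eq_singleton hA hu, card_singleton]
    omega
  refine hG u _ (fun x hx => ?_) (hA.subset fun x hx => (mem_nbhd1.1 hx).1)
  obtain ⟨hxA, rfl | hux⟩ := mem_nbhd1.1 hx
  exacts [absurd hxA hu, hux]

lemma card_nbhd1_inter_le (hG : ClawFree G d) (hd : 2 ≤ d) (hA : IsIndep G A)
    (hv : v ∈ nbhd1 G u (A \ B)) : (nbhd1 G u A ∩ B).card ≤ d - 2 := by
  rw [nbhd1_sdiff, mem_sdiff] at hv
  have hsub : nbhd1 G u A ∩ B ⊆ (nbhd1 G u A).erase v := fun x hx =>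
    mem_erase.2 ⟨fun hxv => hv.2 (hxv ▸ (mem_inter.1 hx).2), (mem_inter.1 hx).1⟩
  have := card_le_card hsub
  rw [card_erase_of_mem hv.1] at this
  have := card_nbhd1_le (u := u) hG hd hA
  omega

lemma card_le_of_forall_adj (hG : ClawFree G d) (hd : 1 ≤ d) (hS : IsIndep G S)
    (hadj : ∀ u ∈ S, u ≠ v → G.Adj v u) : S.card ≤ d := by
  have : (S.erase v).card ≤ d - 1 :=
    hG v _ (fun u hu => hadj u (mem_of_mem_erase hu) (ne_of_mem_erase hu))
      (hS.subset (erase_subset v S))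
  have := pred_card_le_card_erase (s := S) (a := v)
  omega

lemma card_union_image_biUnion_le {T : Finset V} {f : V → Finset V} (t : V → V) (hd : 2 ≤ d)
    (hT : T.card ≤ d) (hf : ∀ u ∈ T, (f u).card ≤ d - 2) :
    (T ∪ (T.biUnion f).image t).card ≤ (d - 1) ^ 2 + (d - 1) := by
  have hD := card_biUnion_le_card_mul T f _ hf
  have := (card_union_le T ((T.biUnion f).image t)).trans
    (Nat.add_le_add_left (card_image_le.trans hD) T.card)
  obtain ⟨k, rfl⟩ := Nat.exists_eq_add_of_le' hd
  rw [show k + 2 - 1 = k + 1 by omega]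
  simp only [Nat.add_sub_cancel] at this
  nlinarith

lemma nbhd_union_image_subset {T D : Finset V} {t : V → V}
    (hTD : ∀ u ∈ T, nbhd1 G u A ∩ B ⊆ D) (ht : ∀ x ∈ D, x ∈ nbhd1 G (t x) A) :
    nbhd G (T ∪ D.image t) A ⊆ insert v ((T.biUnion fun u => (nbhd1 G u (A \ B)).erase v)
      ∪ D.biUnion fun x => nbhd1 G (t x) A) := by
  rw [nbhd_eq_biUnion, union_biUnion, image_biUnion]
  refine union_subset (biUnion_subset.2 fun u hu y hy => ?_)
    (subset_union_right.trans (subset_insert v _))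
  by_cases hyB : y ∈ B
  · have hyD := hTD u hu (mem_inter.2 ⟨hy, hyB⟩)
    exact mem_insert_of_mem (mem_union_right _ (mem_biUnion.2 ⟨y, hyD, ht y hyD⟩))
  by_cases hyv : y = v
  · exact hyv ▸ mem_insert_self y _
  refine mem_insert_of_mem (mem_union_left _ (mem_biUnion.2 ⟨u, hu, ?_⟩))
  rw [mem_erase, nbhd1_sdiff, mem_sdiff]
  exact ⟨hyv, hy, hyB⟩

end Neighborhoods

section Weights

variable {w : V → ℝ} {U U' N : Finset V} {v : V}

lemma wsq_mono (h : U ⊆ U') : wsq w U ≤ wsq w U' :=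
  sum_le_sum_of_subset_of_nonneg h fun _ _ _ => sq_nonneg _

lemma wsq_union_le : wsq w (U ∪ U') ≤ wsq w U + wsq w U' := by
  have := sum_union_inter (s₁ := U) (s₂ := U') (f := fun x => w x ^ 2)
  have : 0 ≤ wsq w (U ∩ U') := sum_nonneg fun x _ => sq_nonneg _
  simp only [wsq] at *
  linarith

lemma wsq_insert_le : wsq w (insert v U) ≤ w v ^ 2 + wsq w U := by
  rw [insert_eq]
  exact wsq_union_le.trans_eq (by simp [wsq])

lemma wsq_biUnion_le {ι : Type*} (s : Finset ι) (f : ι → Finset V) :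
    wsq w (s.biUnion f) ≤ ∑ i ∈ s, wsq w (f i) := by
  induction s using Finset.induction_on with
  | empty => simp [wsq]
  | insert i s hi ih =>
    rw [biUnion_insert, sum_insert hi]
    exact wsq_union_le.trans (by linarith)

lemma wsq_le_sq_of_subset_of_wsum_le (hw : ∀ x, 0 ≤ w x) {c : ℝ} (hUN : U ⊆ N)
    (hN : wsum w N ≤ c) : wsq w U ≤ c ^ 2 := by
  have hU : wsum w U ≤ wsum w N := sum_le_sum_of_subset_of_nonneg hUN fun x _ _ => hw x
  calc wsq w U ≤ wsum w U ^ 2 := sum_sq_le_sq_sum_of_nonneg fun x _ => hw x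
    _ ≤ c ^ 2 := pow_le_pow_left₀ (sum_nonneg fun x _ => hw x) (hU.trans hN) 2

lemma wsq_le_mul_wsum (hw : ∀ x, 0 ≤ w x) {c : ℝ} (hc : ∀ x ∈ U, w x ≤ c) :
    wsq w U ≤ c * wsum w U := by
  rw [wsq, wsum, mul_sum]
  exact sum_le_sum fun x hx => by nlinarith [hw x, hc x hx]

lemma wsq_erase_le (hw : ∀ x, 0 ≤ w x) (hv : v ∈ N) (hmax : ∀ x ∈ N, w x ≤ w v) :
    wsq w (N.erase v) ≤ w v * (wsum w N - w v) := by
  rw [wsum, ← sum_erase_eq_sub hv]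
  exact wsq_le_mul_wsum hw fun x hx => hmax x (mem_of_mem_erase hx)

lemma two_mul_sub_half_wsum_le (hw : ∀ x, 0 ≤ w x) (hv : v ∈ N) (hmax : ∀ x ∈ N, w x ≤ w v)
    (a : ℝ) : 2 * w v * (a - wsum w N / 2) ≤ a ^ 2 - wsq w (N.erase v) := by
  nlinarith [wsq_erase_le hw hv hmax, sq_nonneg (a - w v)]

lemma sq_sub_le_sq_sub_wsq_erase (hw : ∀ x, 0 ≤ w x) (hv : v ∈ N)
    (hmax : ∀ x ∈ N, w x ≤ w v) {a : ℝ} (hN : wsum w N ≤ 2 * a) :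
    (a - w v) ^ 2 ≤ a ^ 2 - wsq w (N.erase v) := by
  nlinarith [wsq_erase_le hw hv hmax, mul_le_mul_of_nonneg_left hN (hw v)]

lemma wsq_le_sq_add (hw : ∀ x, 0 ≤ w x) (hv : v ∈ N) (hmax : ∀ x ∈ N, w x ≤ w v)
    {a δ : ℝ} (hδ : δ ≤ 1) (ha : (1 - δ) * w v ≤ a) (hN : wsum w N ≤ (1 + δ) * w v) :
    wsq w N ≤ a ^ 2 + 3 * δ * w v ^ 2 := by
  have hsplit : wsq w N = wsq w (N.erase v) + w v ^ 2 := (sum_erase_add _ _ hv).symm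
  have hsq : ((1 - δ) * w v) ^ 2 ≤ a ^ 2 :=
    pow_le_pow_left₀ (mul_nonneg (by linarith) (hw v)) ha 2
  nlinarith [wsq_erase_le hw hv hmax, mul_le_mul_of_nonneg_left hN (hw v), sq_nonneg (δ * w v)]

end Weights

section Charges

variable {G : SimpleGraph V} {w : V → ℝ} {A : Finset V} {n : V → V} {u v : V}

lemma eq_of_charge_pos (h : 0 < charge G w A n u v) : v = n u := by
  by_contra hne
  simp [charge, hne] at h

lemma charge_eq_of_pos (h : 0 < charge G w A n u v) :
    charge G w A n u v = w u - wsum w (nbhd1 G u A) / 2 :=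
  if_pos (eq_of_charge_pos h)

lemma wsum_nbhd1_le_of_charge_pos (h : 0 < charge G w A n u v) :
    wsum w (nbhd1 G u A) ≤ 2 * w u := by
  linarith [charge_eq_of_pos h]

lemma wsq_nbhd1_le_of_isSingle (hw : ∀ x, 0 < w x)
    (hn : n u ∈ nbhd1 G u A ∧ ∀ x ∈ nbhd1 G u A, w x ≤ w (n u))
    (hc : 0 < charge G w A n u v) (hs : IsSingle G w A u v) :
    v ∈ nbhd1 G u A ∧ wsq w (nbhd1 G u A) ≤ w u ^ 2 + 3 / 2304 * w v ^ 2 := by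
  rw [← eq_of_charge_pos hc] at hn
  obtain ⟨hlow, -, hN⟩ := hs
  refine ⟨hn.1, ?_⟩
  have := wsq_le_sq_add (fun x => (hw x).le) hn.1 hn.2 (by norm_num)
    ((le_div_iff₀ (hw v)).1 hlow) hN
  linarith

end Charges

lemma sum_sub_half_wsum_le {w : V → ℝ} {T : Finset V} {N : V → Finset V} {v : V} {d γ : ℝ}
    (hw : ∀ x, 0 ≤ w x) (hwv : 0 < w v) (hd : 1 ≤ d) (hγ₀ : 0 ≤ γ) (hγ : γ ≤ 1 / 10)
    (hT : (T.card : ℝ) ≤ d) (hvN : ∀ u ∈ T, v ∈ N u) (hmax : ∀ u ∈ T, ∀ x ∈ N u, w x ≤ w v)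
    (hN : ∀ u ∈ T, wsum w (N u) ≤ 2 * w u)
    (hgain : ∑ u ∈ T, (w u ^ 2 - wsq w ((N u).erase v)) ≤ w v ^ 2 + γ * ∑ u ∈ T, w u ^ 2) :
    ∑ u ∈ T, (w u - wsum w (N u) / 2) ≤ (d + 2) / 4 * w v := by
  set Q := ∑ u ∈ T, (w u ^ 2 - wsq w ((N u).erase v))
  have hcharge : 2 * w v * ∑ u ∈ T, (w u - wsum w (N u) / 2) ≤ Q := by
    rw [mul_sum]
    exact sum_le_sum fun u hu => two_mul_sub_half_wsum_le hw (hvN u hu) (hmax u hu) _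
  have hdev : ∑ u ∈ T, (w u - w v) ^ 2 ≤ Q :=
    sum_le_sum fun u hu => sq_sub_le_sq_sub_wsq_erase hw (hvN u hu) (hmax u hu) (hN u hu)
  have hS : ∑ u ∈ T, w u ^ 2 ≤ 2 * Q + 2 * T.card * w v ^ 2 := by
    calc ∑ u ∈ T, w u ^ 2 ≤ ∑ u ∈ T, (2 * (w u - w v) ^ 2 + 2 * w v ^ 2) :=
          sum_le_sum fun u _ => by nlinarith [sq_nonneg (w u - 2 * w v)]
      _ = 2 * ∑ u ∈ T, (w u - w v) ^ 2 + 2 * T.card * w v ^ 2 := by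
          rw [sum_add_distrib, ← mul_sum, sum_const, nsmul_eq_mul]
          ring
      _ ≤ 2 * Q + 2 * T.card * w v ^ 2 := by linarith
  have hQ : Q * (1 - 2 * γ) ≤ w v ^ 2 * (1 + 2 * γ * d) := by
    nlinarith [mul_le_mul_of_nonneg_left hS hγ₀, mul_le_mul_of_nonneg_left hT
      (mul_nonneg hγ₀ (sq_nonneg (w v)))]
  have hQd : Q ≤ (d + 2) / 2 * w v ^ 2 := by
    nlinarith [mul_le_mul_of_nonneg_left hγ (sq_nonneg (w v)),
      mul_le_mul_of_nonneg_left hd (mul_nonneg hγ₀ (sq_nonneg (w v)))]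
  nlinarith

lemma sum_sq_sub_wsq_erase_le {G : SimpleGraph V} {d : ℕ} {w : V → ℝ}
    {Astar A B T : Finset V} {n t : V → V} {v : V}
    (hG : ClawFree G d) (hd : 2 ≤ d) (hw : ∀ x, 0 < w x)
    (hAstar : IsIndep G Astar) (hA : IsIndep G A)
    (hNoImp : ∀ X : Finset V, ¬ LocalImprovement G d w A X)
    (hn : ∀ u ∈ Astar, n u ∈ nbhd1 G u A ∧ ∀ x ∈ nbhd1 G u A, w x ≤ w (n u))
    (ht : ∀ x ∈ B, t x ∈ Astar ∧ 0 < charge G w A n (t x) x ∧ IsSingle G w A (t x) x)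
    (htInj : ∀ v₁ ∈ B, ∀ v₂ ∈ B, t v₁ = t v₂ → v₁ = v₂)
    (hTA : T ⊆ Astar) (hTB : Disjoint T (B.image t)) (hTcard : T.card ≤ d)
    (hTP : ∀ u ∈ T, wsum w (nbhd1 G u A) ≤ 3 * w u) (hvN : ∀ u ∈ T, v ∈ nbhd1 G u (A \ B)) :
    ∑ u ∈ T, (w u ^ 2 - wsq w ((nbhd1 G u (A \ B)).erase v))
      ≤ w v ^ 2 + 27 / 2304 * ∑ u ∈ T, w u ^ 2 := by
  set D := T.biUnion fun u => nbhd1 G u A ∩ B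
  have hDB : D ⊆ B := biUnion_subset.2 fun _ _ => inter_subset_right
  have hpartner : ∀ x ∈ D, x ∈ nbhd1 G (t x) A ∧
      wsq w (nbhd1 G (t x) A) ≤ w (t x) ^ 2 + 3 / 2304 * w x ^ 2 := fun x hx =>
    have ⟨htA, hc, hs⟩ := ht x (hDB hx)
    wsq_nbhd1_le_of_isSingle hw (hn _ htA) hc hs
  have hX : wsq w (T ∪ D.image t) ≤ wsq w (nbhd G (T ∪ D.image t) A) := by
    refine not_lt.1 fun h => hNoImp _ ⟨hAstar.subset ?_, ?_, h⟩
    · exact union_subset hTA (image_subset_iff.2 fun x hx => (ht x (hDB hx)).1)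
    · exact card_union_image_biUnion_le t hd hTcard fun u hu =>
        card_nbhd1_inter_le hG hd hA (hvN u hu)
  have hXsplit : wsq w (T ∪ D.image t) = ∑ u ∈ T, w u ^ 2 + ∑ x ∈ D, w (t x) ^ 2 := by
    rw [wsq, sum_union (hTB.mono_right (image_subset_image hDB)),
      sum_image fun x hx y hy => htInj x (hDB hx) y (hDB hy)]
  have hcover : wsq w (nbhd G (T ∪ D.image t) A) ≤ w v ^ 2
      + ∑ u ∈ T, wsq w ((nbhd1 G u (A \ B)).erase v) + ∑ x ∈ D, wsq w (nbhd1 G (t x) A) :=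
    calc _ ≤ wsq w (insert v ((T.biUnion fun u => (nbhd1 G u (A \ B)).erase v)
            ∪ D.biUnion fun x => nbhd1 G (t x) A)) :=
          wsq_mono (nbhd_union_image_subset
            (fun u hu => subset_biUnion_of_mem (fun u => nbhd1 G u A ∩ B) hu)
            fun x hx => (hpartner x hx).1)
      _ ≤ w v ^ 2 + (wsq w (T.biUnion fun u => (nbhd1 G u (A \ B)).erase v)
            + wsq w (D.biUnion fun x => nbhd1 G (t x) A)) :=
          wsq_insert_le.trans (add_le_add_right wsq_union_le _)
      _ ≤ _ := by
          rw [← add_assoc]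
          gcongr <;> exact wsq_biUnion_le _ _
  have hpartners : ∑ x ∈ D, wsq w (nbhd1 G (t x) A)
      ≤ ∑ x ∈ D, w (t x) ^ 2 + 3 / 2304 * wsq w D := by
    rw [wsq, mul_sum, ← sum_add_distrib]
    exact sum_le_sum fun x hx => (hpartner x hx).2
  have hD : wsq w D ≤ 9 * ∑ u ∈ T, w u ^ 2 := by
    refine (wsq_biUnion_le T _).trans ?_
    rw [mul_sum]
    exact sum_le_sum fun u hu => (wsq_le_sq_of_subset_of_wsum_le (fun x => (hw x).le)
      inter_subset_left (hTP u hu)).trans_eq (by ring)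
  rw [sum_sub_distrib]
  linarith

theorem stmt19_general (G : SimpleGraph V) (d : ℕ) (hd : 3 ≤ d) (hG : ClawFree G d)
    (w : V → ℝ) (hw : ∀ v, 0 < w v) (Astar A : Finset V)
    (hAstarIndep : IsIndep G Astar)
    (hAIndep : IsIndep G A)
    (hNoImp : ∀ X : Finset V, ¬ LocalImprovement G d w A X)
    (n : V → V)
    (hn : ∀ u ∈ Astar, n u ∈ nbhd1 G u A ∧ ∀ x ∈ nbhd1 G u A, w x ≤ w (n u))
    (B : Finset V) (t : V → V)
    (ht : ∀ v ∈ B, t v ∈ Astar ∧ 0 < charge G w A n (t v) v ∧ IsSingle G w A (t v) v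
        ∧ ∀ u ∈ Astar, 0 < charge G w A n u v → IsSingle G w A u v → u = t v)
    (htInj : ∀ v₁ ∈ B, ∀ v₂ ∈ B, t v₁ = t v₂ → v₁ = v₂)
    (n' : V → V)
    (hn' : ∀ u ∈ Astar \ (B.image t
            ∪ Astar.filter (fun x => 3 * w x ≤ wsum w (nbhd1 G x A))),
        n' u ∈ nbhd1 G u (A \ B) ∧ ∀ x ∈ nbhd1 G u (A \ B), w x ≤ w (n' u)) :
    ∀ v ∈ A \ B,
      ∑ u ∈ (Astar \ (B.image t
            ∪ Astar.filter (fun x => 3 * w x ≤ wsum w (nbhd1 G x A)))).filter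
          (fun u => 0 < charge G w (A \ B) n' u v), charge G w (A \ B) n' u v
        ≤ ((d : ℝ) + 2) / 4 * w v := by
  intro v _
  set T := (Astar \ (B.image t
    ∪ Astar.filter (fun x => 3 * w x ≤ wsum w (nbhd1 G x A)))).filter
      (fun u => 0 < charge G w (A \ B) n' u v)
  have hmem : ∀ u ∈ T, (u ∈ Astar ∧ u ∉ B.image t ∧ wsum w (nbhd1 G u A) < 3 * w u) ∧
      0 < charge G w (A \ B) n' u v := fun u hu => by
    simp only [T, mem_filter, mem_sdiff, mem_union, not_or, not_and, not_le] at hu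
    exact ⟨⟨hu.1.1, hu.1.2.1, hu.1.2.2 hu.1.1⟩, hu.2⟩
  have hmax : ∀ u ∈ T, v ∈ nbhd1 G u (A \ B) ∧ ∀ x ∈ nbhd1 G u (A \ B), w x ≤ w v :=
    fun u hu => eq_of_charge_pos (hmem u hu).2 ▸ hn' u (mem_filter.1 hu).1
  have hTA : T ⊆ Astar := fun u hu => (hmem u hu).1.1
  have hTcard : T.card ≤ d := card_le_of_forall_adj hG (by omega) (hAstarIndep.subset hTA)
    fun u hu hne => ((mem_nbhd1.1 (hmax u hu).1).2.resolve_left hne.symm).symm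
  rw [sum_congr rfl fun u hu => charge_eq_of_pos (hmem u hu).2]
  refine sum_sub_half_wsum_le (γ := 27 / 2304) (fun x => (hw x).le) (hw v)
    (by exact_mod_cast (by omega : 1 ≤ d)) (by norm_num) (by norm_num)
    (by exact_mod_cast hTcard) (fun u hu => (hmax u hu).1) (fun u hu => (hmax u hu).2)
    (fun u hu => wsum_nbhd1_le_of_charge_pos (hmem u hu).2) ?_
  exact sum_sq_sub_wsq_erase_le hG (by omega) hw hAstarIndep hAIndep hNoImp hn
    (fun x hx => ⟨(ht x hx).1, (ht x hx).2.1, (ht x hx).2.2.1⟩) htInj hTA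
    (disjoint_left.2 fun u hu => (hmem u hu).1.2.1) hTcard (fun u hu => (hmem u hu).1.2.2.le)
    fun u hu => (hmax u hu).1

theorem stmt19 [Fintype V] (G : SimpleGraph V) (d : ℕ) (hd : 3 ≤ d) (hG : ClawFree G d)
    (w : V → ℝ) (hw : ∀ v, 0 < w v) (Astar A : Finset V)
    (hAstarIndep : IsIndep G Astar)
    (hAstarMax : ∀ S : Finset V, IsIndep G S → wsum w S ≤ wsum w Astar)
    (hAIndep : IsIndep G A) (hAmax : ∀ v : V, (nbhd1 G v A).Nonempty)
    (hNoImp : ∀ X : Finset V, ¬ LocalImprovement G d w A X)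
    (n : V → V)
    (hn : ∀ u ∈ Astar, n u ∈ nbhd1 G u A ∧ ∀ x ∈ nbhd1 G u A, w x ≤ w (n u))
    (B : Finset V) (hBsub : B ⊆ A) (t : V → V)
    (ht : ∀ v ∈ B, t v ∈ Astar ∧ 0 < charge G w A n (t v) v ∧ IsSingle G w A (t v) v
        ∧ ∀ u ∈ Astar, 0 < charge G w A n u v → IsSingle G w A u v → u = t v)
    (htInj : ∀ v₁ ∈ B, ∀ v₂ ∈ B, t v₁ = t v₂ → v₁ = v₂)
    (n' : V → V)
    (hn' : ∀ u ∈ Astar \ (B.image t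
            ∪ Astar.filter (fun x => 3 * w x ≤ wsum w (nbhd1 G x A))),
        n' u ∈ nbhd1 G u (A \ B) ∧ ∀ x ∈ nbhd1 G u (A \ B), w x ≤ w (n' u)) :
    ∀ v ∈ A \ B,
      ∑ u ∈ (Astar \ (B.image t
            ∪ Astar.filter (fun x => 3 * w x ≤ wsum w (nbhd1 G x A)))).filter
          (fun u => 0 < charge G w (A \ B) n' u v), charge G w (A \ B) n' u v
        ≤ ((d : ℝ) + 2) / 4 * w v :=
  stmt19_general G d hd hG w hw Astar A hAstarIndep hAIndep hNoImp n hn B t ht htInj n' hn'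

end
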